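/- arXiv:2205.11092 — 4 statements merged into one kernel-verified Lean document; each statement's English description precedes it below -/
import Mathlib

section
/- Define α(τ) = arctan( σ² a_H sin((H-1/2)π) / ( ε|τ|^{2H-1} + σ² a_H cos((H-1/2)π) ) ) · sign(τ), where a_H = Γ(2H+1) sin(πH), ε>0, σ²>0, H∈(3/4,1). Then α is an odd function, strictly decreasing on (0,∞), continuous on ℝ∖{0}, with lim_{τ↓0} α(τ) = π(H - 1/2) and α(τ) = O(τ^{1-2H}) as τ → ∞. -/
open MeasureTheory Real Set Filter Asymptotics

lemma arctan_le_self' {x : ℝ} (hx : 0 ≤ x) : Real.arctan x ≤ x := by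
  have h1 : 0 ≤ Real.arctan x := by
    rw [← Real.arctan_zero]; exact Real.arctan_strictMono.monotone hx
  have := Real.le_tan h1 (Real.arctan_lt_pi_div_two x)
  rwa [Real.tan_arctan] at this

/-- properties of the argument function α(τ). -/
theorem stmt_5 (ε σ2 H : ℝ) (hε : 0 < ε) (hσ : 0 < σ2) (hH : H ∈ Set.Ioo (3/4 : ℝ) 1)
    (aH : ℝ) (haH : aH = Real.Gamma (2*H + 1) * Real.sin (Real.pi * H))
    (α : ℝ → ℝ)
    (hα : ∀ τ : ℝ, α τ =
      Real.arctan (σ2 * aH * Real.sin ((H - 1/2) * Real.pi)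
        / (ε * |τ| ^ (2*H - 1) + σ2 * aH * Real.cos ((H - 1/2) * Real.pi))) * Real.sign τ) :
    (∀ τ : ℝ, α (-τ) = -α τ)
    ∧ StrictAntiOn α (Set.Ioi 0)
    ∧ ContinuousOn α {(0:ℝ)}ᶜ
    ∧ Filter.Tendsto α (nhdsWithin 0 (Set.Ioi 0)) (nhds (Real.pi * (H - 1/2)))
    ∧ α =O[Filter.atTop] fun τ : ℝ => τ ^ (1 - 2*H) := by
  obtain ⟨hH1, hH2⟩ := hH
  have hπ := Real.pi_pos
  set θ : ℝ := (H - 1/2) * Real.pi with hθdef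
  have hθ1 : 0 < θ := by
    apply mul_pos _ hπ; linarith
  have hθ2 : θ < Real.pi / 2 := by
    have : H - 1/2 < 1/2 := by linarith
    calc θ < (1/2) * Real.pi := by
            exact mul_lt_mul_of_pos_right this hπ
      _ = Real.pi / 2 := by ring
  have hsinθ : 0 < Real.sin θ :=
    Real.sin_pos_of_pos_of_lt_pi hθ1 (by linarith)
  have hcosθ : 0 < Real.cos θ :=
    Real.cos_pos_of_mem_Ioo ⟨by linarith, hθ2⟩
  have haHpos : 0 < aH := by
    rw [haH]
    apply mul_pos (Real.Gamma_pos_of_pos (by linarith))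
    exact Real.sin_pos_of_pos_of_lt_pi (by positivity)
      (by nlinarith)
  set c : ℝ := σ2 * aH * Real.sin θ with hcdef
  set d : ℝ := σ2 * aH * Real.cos θ with hddef
  have hc : 0 < c := by positivity
  have hd : 0 < d := by positivity
  have hexp : 0 < 2*H - 1 := by linarith
  have hden : ∀ τ : ℝ, 0 < ε * |τ| ^ (2*H - 1) + d := by
    intro τ
    have : (0:ℝ) ≤ ε * |τ| ^ (2*H - 1) := by positivity
    linarith
  -- oddness
  have hodd : ∀ τ : ℝ, α (-τ) = -α τ := by
    intro τ
    rw [hα, hα, abs_neg, Real.sign_neg]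
    ring
  refine ⟨hodd, ?_, ?_, ?_, ?_⟩
  · -- strict anti on Ioi 0
    intro a ha b hb hab
    simp only [Set.mem_Ioi] at ha hb
    rw [hα, hα, Real.sign_of_pos ha, Real.sign_of_pos hb, mul_one, mul_one]
    apply Real.arctan_strictMono
    apply div_lt_div_of_pos_left hc (hden a)
    have : |a| ^ (2*H-1) < |b| ^ (2*H-1) := by
      rw [abs_of_pos ha, abs_of_pos hb]
      exact Real.rpow_lt_rpow ha.le hab hexp
    nlinarith
  · -- continuity on {0}ᶜ
    intro x hx
    simp only [Set.mem_compl_iff, Set.mem_singleton_iff] at hx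
    have hαeq : α = fun τ => Real.arctan (c / (ε * |τ| ^ (2*H-1) + d)) * Real.sign τ :=
      funext hα
    rw [hαeq]
    apply ContinuousAt.continuousWithinAt
    apply ContinuousAt.mul
    · apply Real.continuousAt_arctan.comp
      apply ContinuousAt.div
      · exact continuousAt_const
      · apply ContinuousAt.add _ continuousAt_const
        apply ContinuousAt.mul continuousAt_const
        exact (Real.continuousAt_rpow_const _ _ (Or.inr hexp.le)).comp
          continuous_abs.continuousAt
      · exact (hden x).ne'
    · rcases lt_or_gt_of_ne hx with h | h
      · have : Set.EqOn Real.sign (fun _ => (-1:ℝ)) (Set.Iio 0) := fun y hy =>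
          Real.sign_of_neg hy
        exact (continuousAt_const.congr
          ((this.eventuallyEq_of_mem (Iio_mem_nhds h)).symm))
      · have : Set.EqOn Real.sign (fun _ => (1:ℝ)) (Set.Ioi 0) := fun y hy =>
          Real.sign_of_pos hy
        exact (continuousAt_const.congr
          ((this.eventuallyEq_of_mem (Ioi_mem_nhds h)).symm))
  · -- limit at 0+
    have hcong : Set.EqOn α (fun τ => Real.arctan (c / (ε * |τ| ^ (2*H-1) + d)))
        (Set.Ioi 0) := by
      intro τ hτ
      rw [hα, Real.sign_of_pos hτ, mul_one]
    apply Filter.Tendsto.congr' ((hcong.eventuallyEq_of_mem self_mem_nhdsWithin).symm)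
    have hval : Real.arctan (c / (ε * |(0:ℝ)| ^ (2*H-1) + d)) = Real.pi * (H - 1/2) := by
      rw [abs_zero, Real.zero_rpow hexp.ne', mul_zero, zero_add]
      have : c / d = Real.tan θ := by
        rw [Real.tan_eq_sin_div_cos, hcdef, hddef]
        field_simp
      rw [this, Real.arctan_tan (by linarith) hθ2, hθdef]
      ring
    rw [← hval]
    have hcont : ContinuousAt (fun τ : ℝ => Real.arctan (c / (ε * |τ| ^ (2*H-1) + d))) 0 := by
      apply Real.continuousAt_arctan.comp
      apply ContinuousAt.div continuousAt_const
      · apply ContinuousAt.add _ continuousAt_const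
        apply ContinuousAt.mul continuousAt_const
        exact (Real.continuousAt_rpow_const _ _ (Or.inr hexp.le)).comp
          continuous_abs.continuousAt
      · exact (hden 0).ne'
    exact hcont.continuousWithinAt
  · -- big O at infinity
    rw [Asymptotics.isBigO_iff]
    refine ⟨c / ε, ?_⟩
    filter_upwards [Filter.eventually_gt_atTop 0] with τ hτ
    rw [hα, Real.sign_of_pos hτ, mul_one, abs_of_pos hτ]
    have hτp : (0:ℝ) < τ ^ (2*H-1) := Real.rpow_pos_of_pos hτ _
    have h1 : ‖Real.arctan (c / (ε * τ ^ (2*H-1) + d))‖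
        ≤ c / (ε * τ ^ (2*H-1) + d) := by
      have hy : 0 ≤ c / (ε * τ ^ (2*H-1) + d) := by positivity
      rw [Real.norm_eq_abs, abs_of_nonneg]
      · exact arctan_le_self' hy
      · rw [← Real.arctan_zero]; exact Real.arctan_strictMono.monotone hy
    have h2 : c / (ε * τ ^ (2*H-1) + d) ≤ c / (ε * τ ^ (2*H-1)) := by
      apply div_le_div_of_nonneg_left hc.le (by positivity)
      linarith
    have h3 : c / (ε * τ ^ (2*H-1)) = c / ε * τ ^ (1 - 2*H) := by
      have : (1 - 2*H) = -(2*H - 1) := by ring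
      rw [this, Real.rpow_neg hτ.le]
      field_simp
    have h4 : ‖τ ^ (1 - 2*H)‖ = τ ^ (1 - 2*H) := by
      rw [Real.norm_eq_abs, abs_of_pos (Real.rpow_pos_of_pos hτ _)]
    rw [h4]
    calc ‖Real.arctan (c / (ε * τ ^ (2*H-1) + d))‖
        ≤ c / (ε * τ ^ (2*H-1) + d) := h1
      _ ≤ c / (ε * τ ^ (2*H-1)) := h2
      _ = c / ε * τ ^ (1 - 2*H) := h3
end

section
/- Let h: ℝ₊ → ℝ be continuous, nonnegative, with h(0+) = sin(π(H - 1/2)) ∈ (0,1) for some H ∈ (3/4,1), h bounded, and h(τ) → 0 as τ → ∞. Define the operator (A_t f)(s) = (1/π) ∫₀^∞ h(τ) e^{-tτ} f(τ) / (τ + s) dτ on L²(ℝ₊). Then there exist T_min > 0 and β ∈ (0,1) such that ‖A_t f‖ ≤ (1-β)‖f‖ for all f ∈ L²(ℝ₊) and all t ≥ T_min. -/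
/-!
Write `k(τ) = h(τ) e^{-tτ}`. Since `h(0+) < 1`, `h` is bounded and `e^{-tτ} → 0` uniformly on
`τ ≥ δ`, one has `sup_{τ > 0} |k(τ)| ≤ 1 - β` for all large `t`. It then suffices that the
Hilbert-type operator `f ↦ π⁻¹ ∫₀^∞ k(τ) f(τ) / (τ + s) dτ` has norm at most `sup |k|` on
`L²(ℝ₊)`. This is Schur's test with the weight `τ^{-1/2}`, because
`∫₀^∞ τ^{-1/2} / (τ + s) dτ = π s^{-1/2}`.
-/

open MeasureTheory Real Set Filter Function Topology
open scoped ENNReal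

theorem integral_Ioi_inv_sq_add {s : ℝ} (hs : 0 < s) :
    ∫ x in Ioi (0:ℝ), (x ^ 2 + s)⁻¹ = π / (2 * √s) := by
  have hs' : 0 < √s := sqrt_pos.mpr hs
  have key := integral_comp_mul_left_Ioi (fun y : ℝ => (1 + y ^ 2)⁻¹) 0 (inv_pos.mpr hs')
  simp only [mul_zero, integral_Ioi_inv_one_add_sq, arctan_zero, sub_zero, inv_inv,
    smul_eq_mul] at key
  have hpt : ∀ x : ℝ, (1 + ((√s)⁻¹ * x) ^ 2)⁻¹ = s * (x ^ 2 + s)⁻¹ := fun x => by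
    have := sq_sqrt hs.le
    field_simp
    rw [this]; ring
  simp_rw [hpt, integral_const_mul] at key
  rw [← mul_right_inj' hs.ne', key]
  field_simp
  rw [sq_sqrt hs.le]

theorem integral_Ioi_inv_sqrt_div_add {s : ℝ} (hs : 0 < s) :
    ∫ τ in Ioi (0:ℝ), (√τ)⁻¹ / (τ + s) = π / √s := by
  rw [← integral_comp_rpow_Ioi_of_pos (g := fun τ => (√τ)⁻¹ / (τ + s)) two_pos]
  have hpt : EqOn (fun x : ℝ => ((2:ℝ) * x ^ ((2:ℝ) - 1)) • ((√(x ^ (2:ℝ)))⁻¹ / (x ^ (2:ℝ) + s)))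
      (fun x => 2 * (x ^ 2 + s)⁻¹) (Ioi 0) := fun x (hx : 0 < x) => by
    simp only [rpow_two, sqrt_sq hx.le, smul_eq_mul]
    norm_num
    field_simp
  rw [setIntegral_congr_fun measurableSet_Ioi hpt, integral_const_mul,
    integral_Ioi_inv_sq_add hs]
  field_simp

theorem lintegral_Ioi_inv_add_mul_inv_sqrt {s : ℝ} (hs : 0 < s) :
    ∫⁻ τ in Ioi (0:ℝ), ENNReal.ofReal (τ + s)⁻¹ * ENNReal.ofReal (√τ)⁻¹
      = ENNReal.ofReal π * ENNReal.ofReal (√s)⁻¹ := by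
  have hint : IntegrableOn (fun τ : ℝ => (√τ)⁻¹ / (τ + s)) (Ioi 0) :=
    .of_integral_ne_zero (by rw [integral_Ioi_inv_sqrt_div_add hs]; positivity)
  have hpt : EqOn (fun τ : ℝ => ENNReal.ofReal (τ + s)⁻¹ * ENNReal.ofReal (√τ)⁻¹)
      (fun τ => ENNReal.ofReal ((√τ)⁻¹ / (τ + s))) (Ioi 0) := fun τ (hτ : 0 < τ) => by
    dsimp only
    rw [← ENNReal.ofReal_mul (by positivity), div_eq_mul_inv, mul_comm]
  rw [setLIntegral_congr_fun measurableSet_Ioi hpt, ← ofReal_integral_eq_lintegral_ofReal hint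
    ((ae_restrict_iff' measurableSet_Ioi).mpr (.of_forall fun τ (hτ : 0 < τ) => by positivity)),
    integral_Ioi_inv_sqrt_div_add hs, ← ENNReal.ofReal_mul pi_pos.le, div_eq_mul_inv]

theorem ENNReal.rpow_two_inv_sq (x : ℝ≥0∞) : (x ^ (2⁻¹ : ℝ)) ^ 2 = x := by
  simpa using ENNReal.rpow_inv_natCast_pow (n := 2) two_ne_zero x

section Schur

variable {α β : Type*} [MeasurableSpace α] [MeasurableSpace β] {μ : Measure α} {ν : Measure β}

theorem eLpNorm_two_sq_eq_lintegral {f : α → ℝ≥0∞} :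
    eLpNorm f 2 μ ^ 2 = ∫⁻ a, f a ^ 2 ∂μ := by
  simpa [ENNReal.rpow_two] using eLpNorm_nnreal_pow_eq_lintegral (f := f) (μ := μ) two_ne_zero

theorem ENNReal.sq_lintegral_mul_le {f g : α → ℝ≥0∞} (hf : AEMeasurable f μ)
    (hg : AEMeasurable g μ) :
    (∫⁻ a, f a * g a ∂μ) ^ 2 ≤ (∫⁻ a, f a ^ 2 ∂μ) * ∫⁻ a, g a ^ 2 ∂μ := by
  have holder := ENNReal.lintegral_mul_le_Lp_mul_Lq μ .two_two hf hg
  simp only [ENNReal.rpow_two, one_div] at holder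
  calc (∫⁻ a, f a * g a ∂μ) ^ 2
      ≤ ((∫⁻ a, f a ^ 2 ∂μ) ^ (2⁻¹ : ℝ) * (∫⁻ a, g a ^ 2 ∂μ) ^ (2⁻¹ : ℝ)) ^ 2 := by
        gcongr; exact holder
    _ = _ := by rw [mul_pow, ENNReal.rpow_two_inv_sq, ENNReal.rpow_two_inv_sq]

/-- Cauchy–Schwarz after splitting `k φ = √(k p) · √(k φ² / p)`. -/
theorem ENNReal.sq_lintegral_mul_le_of_weight {k p φ : α → ℝ≥0∞} (hk : Measurable k)
    (hp : Measurable p) (hφ : Measurable φ) (hp_pos : ∀ᵐ a ∂μ, p a ≠ 0)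
    (hp_top : ∀ᵐ a ∂μ, p a ≠ ∞) :
    (∫⁻ a, k a * φ a ∂μ) ^ 2 ≤ (∫⁻ a, k a * p a ∂μ) * ∫⁻ a, k a * (φ a ^ 2 / p a) ∂μ := by
  have hsplit : (fun a => k a * φ a) =ᵐ[μ]
      fun a => (k a * p a) ^ (2⁻¹ : ℝ) * (k a * (φ a ^ 2 / p a)) ^ (2⁻¹ : ℝ) := by
    filter_upwards [hp_pos, hp_top] with a h0 htop
    have hsq : k a * p a * (k a * (φ a ^ 2 / p a)) = (k a * φ a) ^ 2 := by
      rw [mul_mul_mul_comm, ENNReal.mul_div_cancel h0 htop]; ring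
    rw [← ENNReal.mul_rpow_of_nonneg _ _ (by norm_num), hsq]
    simpa using (ENNReal.pow_rpow_inv_natCast (n := 2) two_ne_zero (k a * φ a)).symm
  have hψ : Measurable fun a => φ a ^ 2 / p a := (hφ.pow_const 2).div hp
  rw [lintegral_congr_ae hsplit]
  have := ENNReal.sq_lintegral_mul_le ((hk.mul hp).pow_const (2⁻¹ : ℝ)).aemeasurable
    ((hk.mul hψ).pow_const (2⁻¹ : ℝ)).aemeasurable (μ := μ)
  simpa only [Pi.mul_apply, ENNReal.rpow_two_inv_sq] using this

theorem lintegral_sq_lintegral_mul_le_of_schur [SFinite μ] [SFinite ν] {K : α → β → ℝ≥0∞}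
    (hK : Measurable (uncurry K)) {p : β → ℝ≥0∞} {q : α → ℝ≥0∞} (hp : Measurable p)
    (hq : Measurable q) (hp_pos : ∀ᵐ y ∂ν, p y ≠ 0) (hp_top : ∀ᵐ y ∂ν, p y ≠ ∞)
    {C₁ C₂ : ℝ≥0∞} (h₁ : ∀ᵐ x ∂μ, ∫⁻ y, K x y * p y ∂ν ≤ C₁ * q x)
    (h₂ : ∀ᵐ y ∂ν, ∫⁻ x, K x y * q x ∂μ ≤ C₂ * p y) {φ : β → ℝ≥0∞} (hφ : Measurable φ) :
    ∫⁻ x, (∫⁻ y, K x y * φ y ∂ν) ^ 2 ∂μ ≤ C₁ * C₂ * ∫⁻ y, φ y ^ 2 ∂ν := by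
  set ψ : β → ℝ≥0∞ := fun y => φ y ^ 2 / p y
  have hψ : Measurable ψ := (hφ.pow_const 2).div hp
  have hKx (x : α) : Measurable (K x) := hK.comp measurable_prodMk_left
  have cauchy_schwarz (x : α) :
      (∫⁻ y, K x y * φ y ∂ν) ^ 2 ≤ (∫⁻ y, K x y * p y ∂ν) * ∫⁻ y, K x y * ψ y ∂ν :=
    ENNReal.sq_lintegral_mul_le_of_weight (hKx x) hp hφ hp_pos hp_top
  calc ∫⁻ x, (∫⁻ y, K x y * φ y ∂ν) ^ 2 ∂μ
      ≤ ∫⁻ x, C₁ * (q x * ∫⁻ y, K x y * ψ y ∂ν) ∂μ := by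
        refine lintegral_mono_ae (h₁.mono fun x hx => (cauchy_schwarz x).trans ?_)
        rw [← mul_assoc]; gcongr
    _ = C₁ * ∫⁻ y, ψ y * ∫⁻ x, K x y * q x ∂μ ∂ν := by
        have hKψ : Measurable (uncurry fun x y => K x y * ψ y) :=
          hK.mul (hψ.comp measurable_snd)
        have hm : Measurable fun x => q x * ∫⁻ y, K x y * ψ y ∂ν :=
          hq.mul hKψ.lintegral_prod_right'
        rw [lintegral_const_mul _ hm]
        congr 1
        calc ∫⁻ x, q x * ∫⁻ y, K x y * ψ y ∂ν ∂μ = ∫⁻ x, ∫⁻ y, q x * (K x y * ψ y) ∂ν ∂μ :=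
              lintegral_congr fun x => (lintegral_const_mul _ ((hKx x).mul hψ)).symm
          _ = ∫⁻ y, ∫⁻ x, q x * (K x y * ψ y) ∂μ ∂ν :=
              lintegral_lintegral_swap ((hq.comp measurable_fst).mul hKψ).aemeasurable
          _ = ∫⁻ y, ψ y * ∫⁻ x, K x y * q x ∂μ ∂ν := lintegral_congr fun y => by
              have hKq : Measurable fun x => K x y * q x :=
                (hK.comp measurable_prodMk_right).mul hq
              rw [← lintegral_const_mul _ hKq]
              congr 1 with x; ring
    _ ≤ C₁ * ∫⁻ y, C₂ * φ y ^ 2 ∂ν := by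
        gcongr C₁ * ?_
        refine lintegral_mono_ae ?_
        filter_upwards [h₂, hp_pos, hp_top] with y hy h0 htop
        calc ψ y * ∫⁻ x, K x y * q x ∂μ ≤ ψ y * (C₂ * p y) := by gcongr
          _ = C₂ * φ y ^ 2 := by rw [mul_left_comm, ENNReal.div_mul_cancel h0 htop]
    _ = C₁ * C₂ * ∫⁻ y, φ y ^ 2 ∂ν := by rw [lintegral_const_mul _ (hφ.pow_const 2), mul_assoc]

end Schur

section Hilbert

local notation "μ₊" => (volume.restrict (Ioi (0:ℝ)))

theorem eLpNorm_lintegral_inv_add_mul_le {φ : ℝ → ℝ≥0∞} (hφ : AEMeasurable φ μ₊) :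
    eLpNorm (fun s => ∫⁻ τ in Ioi (0:ℝ), ENNReal.ofReal (τ + s)⁻¹ * φ τ) 2 μ₊
      ≤ ENNReal.ofReal π * eLpNorm φ 2 μ₊ := by
  have hmk : (fun s => ∫⁻ τ in Ioi (0:ℝ), ENNReal.ofReal (τ + s)⁻¹ * φ τ)
      = fun s => ∫⁻ τ in Ioi (0:ℝ), ENNReal.ofReal (τ + s)⁻¹ * hφ.mk φ τ := funext fun s =>
    lintegral_congr_ae (hφ.ae_eq_mk.mono fun τ hτ => by simp only [hτ])
  rw [hmk, eLpNorm_congr_ae hφ.ae_eq_mk,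
    ← ENNReal.pow_le_pow_left_iff two_ne_zero, mul_pow,
    eLpNorm_two_sq_eq_lintegral, eLpNorm_two_sq_eq_lintegral, sq]
  have hpos : ∀ᵐ τ ∂μ₊, ENNReal.ofReal (√τ)⁻¹ ≠ 0 :=
    (ae_restrict_iff' measurableSet_Ioi).mpr (.of_forall fun τ (hτ : 0 < τ) => by
      simp only [ne_eq, ENNReal.ofReal_eq_zero, not_le]; positivity)
  have hweight (s : ℝ) (hs : s ∈ Ioi 0) := lintegral_Ioi_inv_add_mul_inv_sqrt hs
  refine lintegral_sq_lintegral_mul_le_of_schur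
    (K := fun s τ => ENNReal.ofReal (τ + s)⁻¹)
    (measurable_snd.add measurable_fst).inv.ennreal_ofReal
    (measurable_id.sqrt.inv.ennreal_ofReal) (measurable_id.sqrt.inv.ennreal_ofReal)
    hpos (.of_forall fun _ => ENNReal.ofReal_ne_top) ?_ ?_ hφ.measurable_mk
  · exact (ae_restrict_iff' measurableSet_Ioi).mpr (.of_forall fun s hs => (hweight s hs).le)
  · refine (ae_restrict_iff' measurableSet_Ioi).mpr (.of_forall fun τ hτ => ?_)
    simp_rw [add_comm τ]
    exact (hweight τ hτ).le

theorem enorm_integral_mul_div_add_le {k f : ℝ → ℝ} {c s : ℝ} (hk : ∀ τ, 0 < τ → |k τ| ≤ c)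
    (hs : 0 < s) :
    ‖∫ τ in Ioi (0:ℝ), k τ * f τ / (τ + s)‖ₑ
      ≤ ENNReal.ofReal c * ∫⁻ τ in Ioi (0:ℝ), ENNReal.ofReal (τ + s)⁻¹ * ‖f τ‖ₑ := by
  have hc : 0 ≤ c := (abs_nonneg _).trans (hk 1 one_pos)
  refine (enorm_integral_le_lintegral_enorm _).trans ?_
  rw [← lintegral_const_mul' _ _ ENNReal.ofReal_ne_top]
  refine setLIntegral_mono' measurableSet_Ioi fun τ (hτ : 0 < τ) => ?_
  rw [Real.enorm_eq_ofReal_abs, Real.enorm_eq_ofReal_abs, ← ENNReal.ofReal_mul (by positivity),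
    ← ENNReal.ofReal_mul hc]
  refine ENNReal.ofReal_le_ofReal ?_
  rw [abs_div, abs_mul, abs_of_pos (by positivity : 0 < τ + s), div_eq_mul_inv]
  calc |k τ| * |f τ| * (τ + s)⁻¹ ≤ c * |f τ| * (τ + s)⁻¹ := by gcongr; exact hk τ hτ
    _ = c * ((τ + s)⁻¹ * |f τ|) := by ring

theorem eLpNorm_integral_mul_div_add_le {k f : ℝ → ℝ} {c : ℝ} (hk : ∀ τ, 0 < τ → |k τ| ≤ c)
    (hf : AEStronglyMeasurable f μ₊) :
    eLpNorm (fun s => (1 / π) * ∫ τ in Ioi (0:ℝ), k τ * f τ / (τ + s)) 2 μ₊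
      ≤ ENNReal.ofReal c * eLpNorm f 2 μ₊ := by
  have hc : 0 ≤ c := (abs_nonneg _).trans (hk 1 one_pos)
  have hpt : ∀ᵐ s ∂μ₊, ‖(1 / π) * ∫ τ in Ioi (0:ℝ), k τ * f τ / (τ + s)‖ₑ
      ≤ (c / π).toNNReal * ‖∫⁻ τ in Ioi (0:ℝ), ENNReal.ofReal (τ + s)⁻¹ * ‖f τ‖ₑ‖ₑ := by
    refine (ae_restrict_iff' measurableSet_Ioi).mpr (.of_forall fun s (hs : 0 < s) => ?_)
    rw [enorm_mul, Real.enorm_eq_ofReal (by positivity), enorm_eq_self]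
    calc ENNReal.ofReal (1 / π) * ‖∫ τ in Ioi (0:ℝ), k τ * f τ / (τ + s)‖ₑ
        ≤ ENNReal.ofReal (1 / π) * (ENNReal.ofReal c
            * ∫⁻ τ in Ioi (0:ℝ), ENNReal.ofReal (τ + s)⁻¹ * ‖f τ‖ₑ) := by
          gcongr; exact enorm_integral_mul_div_add_le hk hs
      _ = _ := by
          rw [← mul_assoc, ← ENNReal.ofReal_mul (by positivity), one_div_mul_eq_div]; rfl
  calc _ ≤ (c / π).toNNReal • eLpNorm
          (fun s => ∫⁻ τ in Ioi (0:ℝ), ENNReal.ofReal (τ + s)⁻¹ * ‖f τ‖ₑ) 2 μ₊ :=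
        eLpNorm_le_nnreal_smul_eLpNorm_of_ae_le_mul' hpt 2
    _ ≤ ENNReal.ofReal (c / π) * (ENNReal.ofReal π * eLpNorm (fun τ => ‖f τ‖ₑ) 2 μ₊) := by
        rw [ENNReal.smul_def, smul_eq_mul]
        exact mul_le_mul_right (eLpNorm_lintegral_inv_add_mul_le hf.enorm) _
    _ = ENNReal.ofReal c * eLpNorm f 2 μ₊ := by
        rw [eLpNorm_enorm, ← mul_assoc, ← ENNReal.ofReal_mul (by positivity),
          div_mul_cancel₀ _ pi_ne_zero]

end Hilbert

theorem eventually_forall_abs_mul_exp_le {h : ℝ → ℝ} {L C M : ℝ}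
    (h0 : Tendsto h (𝓝[>] 0) (𝓝 L)) (hLC : L < C) (hnonneg : ∀ τ, 0 < τ → 0 ≤ h τ)
    (hM : ∀ τ, 0 < τ → h τ ≤ M) :
    ∀ᶠ t in atTop, ∀ τ, 0 < τ → |h τ * exp (-t * τ)| ≤ C := by
  obtain ⟨δ, hδ, hsmall⟩ :=
    mem_nhdsGT_iff_exists_Ioo_subset.mp (h0.eventually (gt_mem_nhds hLC))
  have hlin : Tendsto (fun t : ℝ => -t * δ) atTop atBot :=
    tendsto_neg_atTop_atBot.atBot_mul_const hδ
  have hdecay : Tendsto (fun t => M * exp (-t * δ)) atTop (𝓝 0) := by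
    simpa using (tendsto_exp_atBot.comp hlin).const_mul M
  have hC : 0 < C :=
    (hnonneg _ (half_pos hδ)).trans_lt (hsmall ⟨half_pos hδ, half_lt_self hδ⟩)
  filter_upwards [hdecay.eventually (gt_mem_nhds hC), eventually_ge_atTop 0]
    with t hdecay_t ht τ hτ
  rw [abs_of_nonneg (mul_nonneg (hnonneg τ hτ) (exp_pos _).le)]
  rcases lt_or_ge τ δ with hτδ | hτδ
  · calc h τ * exp (-t * τ) ≤ h τ * 1 := by
          gcongr
          · exact hnonneg τ hτ
          · exact exp_le_one_iff.mpr (by nlinarith)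
      _ ≤ C := by rw [mul_one]; exact (hsmall ⟨hτ, hτδ⟩).le
  · calc h τ * exp (-t * τ) ≤ M * exp (-t * δ) :=
          mul_le_mul (hM τ hτ) (exp_le_exp.mpr (by nlinarith)) (exp_pos _).le
            ((hnonneg τ hτ).trans (hM τ hτ))
      _ ≤ C := hdecay_t.le

theorem stmt_8_general (H : ℝ) (h : ℝ → ℝ)
    (hnonneg : ∀ τ : ℝ, 0 < τ → 0 ≤ h τ)
    (h0 : Filter.Tendsto h (nhdsWithin 0 (Set.Ioi 0)) (nhds (Real.sin (Real.pi * (H - 1/2)))))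
    (h01 : Real.sin (Real.pi * (H - 1/2)) ∈ Set.Ioo (0:ℝ) 1)
    (M : ℝ) (hM : ∀ τ : ℝ, 0 < τ → h τ ≤ M) :
    ∃ Tmin > (0:ℝ), ∃ β ∈ Set.Ioo (0:ℝ) 1, ∀ t : ℝ, Tmin ≤ t →
      ∀ f : ℝ → ℝ, MemLp f 2 (volume.restrict (Set.Ioi 0)) →
        eLpNorm (fun s : ℝ => (1/Real.pi) * ∫ τ in Set.Ioi (0:ℝ),
            h τ * Real.exp (-t * τ) * f τ / (τ + s)) 2 (volume.restrict (Set.Ioi 0))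
          ≤ ENNReal.ofReal (1 - β) * eLpNorm f 2 (volume.restrict (Set.Ioi 0)) := by
  set L := sin (π * (H - 1 / 2))
  obtain ⟨hL0, hL1⟩ := h01
  obtain ⟨T, hT⟩ := eventually_atTop.mp
    (eventually_forall_abs_mul_exp_le h0 (by linarith : L < 1 - (1 - L) / 2) hnonneg hM)
  refine ⟨max T 1, by positivity, (1 - L) / 2, ⟨by linarith, by linarith⟩,
    fun t ht f hf => ?_⟩
  exact eLpNorm_integral_mul_div_add_le (hT t (le_of_max_le_left ht)) hf.1

/-- the operator (A_t f)(s) = (1/π)∫₀^∞ h(τ)e^{-tτ} f(τ)/(τ+s) dτ is a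
uniform contraction on L²(ℝ₊) for all large t. -/
theorem stmt_8 (H : ℝ) (hH : H ∈ Set.Ioo (3/4 : ℝ) 1) (h : ℝ → ℝ)
    (hcont : ContinuousOn h (Set.Ioi 0))
    (hnonneg : ∀ τ : ℝ, 0 < τ → 0 ≤ h τ)
    (h0 : Filter.Tendsto h (nhdsWithin 0 (Set.Ioi 0)) (nhds (Real.sin (Real.pi * (H - 1/2)))))
    (h01 : Real.sin (Real.pi * (H - 1/2)) ∈ Set.Ioo (0:ℝ) 1)
    (M : ℝ) (hM : ∀ τ : ℝ, 0 < τ → h τ ≤ M)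
    (hinf : Filter.Tendsto h Filter.atTop (nhds 0)) :
    ∃ Tmin > (0:ℝ), ∃ β ∈ Set.Ioo (0:ℝ) 1, ∀ t : ℝ, Tmin ≤ t →
      ∀ f : ℝ → ℝ, MemLp f 2 (volume.restrict (Set.Ioi 0)) →
        eLpNorm (fun s : ℝ => (1/Real.pi) * ∫ τ in Set.Ioi (0:ℝ),
            h τ * Real.exp (-t * τ) * f τ / (τ + s)) 2 (volume.restrict (Set.Ioi 0))
          ≤ ENNReal.ofReal (1 - β) * eLpNorm f 2 (volume.restrict (Set.Ioi 0)) :=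
  stmt_8_general H h hnonneg h0 h01 M hM
end

section
/- Let h: ℝ₊ → ℝ₊ be bounded and measurable, t > 0 and r ∈ [0, 1/2). Then the function ψ(s) = (1/2π) ∫₀^∞ h(τ) e^{-tτ} s^{-r} / (τ+s) dτ satisfies ‖ψ‖_{L²(ℝ₊)} ≤ C t^{r - 1/2} for a constant C depending only on ‖h‖_∞ and r. -/
open MeasureTheory Real Set Filter

/-! Bounding `h` by `M` and `e^{-x}` by `x^{-a}` for `0 < a < 1` gives the pointwise estimate
`|ψ(s)| ≤ C_a M t^{-a} s^{-r-a}`, because `∫₀^∞ τ^{-a} / (τ + s) dτ ≤ C_a s^{-a}`. A small `a` makes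
`s^{-r-a}` square integrable near `0`, a large one near `∞`; splitting `(0, ∞)` at `1/t`, both
pieces of `‖ψ‖²` scale like `t^{2r-1}`. -/

lemma Real.exp_neg_le_rpow_neg {a x : ℝ} (ha₀ : 0 ≤ a) (ha₁ : a ≤ 1) (hx : 0 < x) :
    exp (-x) ≤ x ^ (-a) := by
  rw [rpow_neg hx.le, exp_neg]
  refine inv_anti₀ (rpow_pos_of_pos hx a) ?_
  rw [rpow_def_of_pos hx, exp_le_exp]
  have := log_le_sub_one_of_pos hx
  rcases le_total (log x) 0 with h | h <;> nlinarith

lemma integral_Ioc_rpow_of_neg_one_lt {p c : ℝ} (hp : -1 < p) (hc : 0 ≤ c) :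
    ∫ τ in Ioc 0 c, τ ^ p = c ^ (p + 1) / (p + 1) := by
  rw [← intervalIntegral.integral_of_le hc, integral_rpow (Or.inl hp),
    zero_rpow (by linarith), sub_zero]

lemma integrableOn_Ioc_rpow_of_neg_one_lt {p c : ℝ} (hp : -1 < p) :
    IntegrableOn (fun τ => τ ^ p) (Ioc 0 c) :=
  (intervalIntegral.intervalIntegrable_rpow' hp).1

section Kernel

variable {a s : ℝ}

lemma rpow_neg_div_add_le_inv_mul {τ : ℝ} (hτ : 0 < τ) (hs : 0 < s) :
    τ ^ (-a) / (τ + s) ≤ s⁻¹ * τ ^ (-a) := by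
  rw [div_eq_inv_mul]
  gcongr
  linarith

lemma rpow_neg_div_add_le_rpow_sub_one {τ : ℝ} (hτ : 0 < τ) (hs : 0 < s) :
    τ ^ (-a) / (τ + s) ≤ τ ^ (-a - 1) := by
  rw [rpow_sub hτ, rpow_one]
  gcongr
  linarith

lemma integrableOn_Ioi_rpow_neg_div_add (ha₀ : 0 < a) (ha₁ : a < 1) (hs : 0 < s) :
    IntegrableOn (fun τ => τ ^ (-a) / (τ + s)) (Ioi 0) := by
  have hmeas : AEStronglyMeasurable (fun τ : ℝ => τ ^ (-a) / (τ + s)) :=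
    (by fun_prop : Measurable fun τ : ℝ => τ ^ (-a) / (τ + s)).aestronglyMeasurable
  rw [← Ioc_union_Ioi_eq_Ioi hs.le]
  refine IntegrableOn.union ?_ ?_
  · refine Integrable.mono'
      ((integrableOn_Ioc_rpow_of_neg_one_lt (p := -a) (by linarith)).const_mul s⁻¹)
      hmeas.restrict ?_
    filter_upwards [ae_restrict_mem measurableSet_Ioc] with τ hτ
    rw [norm_of_nonneg (by have := hτ.1; positivity)]
    exact rpow_neg_div_add_le_inv_mul hτ.1 hs
  · refine Integrable.mono' (integrableOn_Ioi_rpow_of_lt (a := -a - 1) (by linarith) hs)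
      hmeas.restrict ?_
    filter_upwards [ae_restrict_mem measurableSet_Ioi] with τ hτ
    have hτ₀ : 0 < τ := hs.trans hτ
    rw [norm_of_nonneg (by positivity)]
    exact rpow_neg_div_add_le_rpow_sub_one hτ₀ hs

lemma setIntegral_Ioi_rpow_neg_div_add_le (ha₀ : 0 < a) (ha₁ : a < 1) (hs : 0 < s) :
    ∫ τ in Ioi 0, τ ^ (-a) / (τ + s) ≤ (1 / (1 - a) + 1 / a) * s ^ (-a) := by
  have hf := integrableOn_Ioi_rpow_neg_div_add ha₀ ha₁ hs
  have hnear : ∫ τ in Ioc 0 s, τ ^ (-a) / (τ + s) ≤ 1 / (1 - a) * s ^ (-a) := calc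
    _ ≤ ∫ τ in Ioc 0 s, s⁻¹ * τ ^ (-a) :=
      setIntegral_mono_on (hf.mono_set Ioc_subset_Ioi_self)
        ((integrableOn_Ioc_rpow_of_neg_one_lt (by linarith)).const_mul _) measurableSet_Ioc
        fun τ hτ => rpow_neg_div_add_le_inv_mul hτ.1 hs
    _ = 1 / (1 - a) * s ^ (-a) := by
      rw [integral_const_mul, integral_Ioc_rpow_of_neg_one_lt (by linarith) hs.le,
        show -a + 1 = 1 + -a by ring, rpow_add hs, rpow_one]
      field_simp
      ring
  have hfar : ∫ τ in Ioi s, τ ^ (-a) / (τ + s) ≤ 1 / a * s ^ (-a) := calc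
    _ ≤ ∫ τ in Ioi s, τ ^ (-a - 1) :=
      setIntegral_mono_on (hf.mono_set (Ioi_subset_Ioi hs.le))
        (integrableOn_Ioi_rpow_of_lt (by linarith) hs) measurableSet_Ioi
        fun τ hτ => rpow_neg_div_add_le_rpow_sub_one (hs.trans hτ) hs
    _ = 1 / a * s ^ (-a) := by
      rw [integral_Ioi_rpow_of_lt (by linarith) hs, sub_add_cancel, neg_div_neg_eq,
        one_div_mul_eq_div]
  rw [← Ioc_union_Ioi_eq_Ioi hs.le, setIntegral_union Ioc_disjoint_Ioi_same measurableSet_Ioi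
    (hf.mono_set Ioc_subset_Ioi_self) (hf.mono_set (Ioi_subset_Ioi hs.le)), add_mul]
  exact add_le_add hnear hfar

end Kernel

lemma norm_setIntegral_mul_exp_div_add_le {M a r t s : ℝ} {h : ℝ → ℝ}
    (hh : ∀ τ, 0 < τ → 0 ≤ h τ ∧ h τ ≤ M) (ha₀ : 0 < a) (ha₁ : a < 1) (ht : 0 < t)
    (hs : 0 < s) :
    ‖∫ τ in Ioi 0, h τ * exp (-t * τ) * s ^ (-r) / (τ + s)‖
      ≤ M * (1 / (1 - a) + 1 / a) * t ^ (-a) * s ^ (-(r + a)) := by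
  have hM : 0 ≤ M := (hh 1 one_pos).1.trans (hh 1 one_pos).2
  have hdom : ∀ᵐ τ ∂volume.restrict (Ioi 0), ‖h τ * exp (-t * τ) * s ^ (-r) / (τ + s)‖
      ≤ M * t ^ (-a) * s ^ (-r) * (τ ^ (-a) / (τ + s)) := by
    filter_upwards [ae_restrict_mem measurableSet_Ioi] with τ (hτ : 0 < τ)
    obtain ⟨hh₀, hhM⟩ := hh τ hτ
    have hexp : exp (-t * τ) ≤ t ^ (-a) * τ ^ (-a) := by
      rw [← mul_rpow ht.le hτ.le, neg_mul]
      exact exp_neg_le_rpow_neg ha₀.le ha₁.le (mul_pos ht hτ)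
    rw [norm_of_nonneg (by positivity)]
    calc _ ≤ M * (t ^ (-a) * τ ^ (-a)) * s ^ (-r) / (τ + s) := by gcongr
      _ = _ := by ring
  calc _ ≤ ∫ τ in Ioi 0, M * t ^ (-a) * s ^ (-r) * (τ ^ (-a) / (τ + s)) :=
        norm_integral_le_of_norm_le
          ((integrableOn_Ioi_rpow_neg_div_add ha₀ ha₁ hs).const_mul _) hdom
    _ = M * t ^ (-a) * s ^ (-r) * ∫ τ in Ioi 0, τ ^ (-a) / (τ + s) := integral_const_mul _ _
    _ ≤ M * t ^ (-a) * s ^ (-r) * ((1 / (1 - a) + 1 / a) * s ^ (-a)) := by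
        gcongr
        exact setIntegral_Ioi_rpow_neg_div_add_le ha₀ ha₁ hs
    _ = _ := by
        rw [neg_add, rpow_add hs]
        ring

lemma setLIntegral_Ioc_ofReal_mul_rpow {K p c : ℝ} (hK : 0 ≤ K) (hp : -1 < p) (hc : 0 ≤ c) :
    ∫⁻ s in Ioc 0 c, ENNReal.ofReal (K * s ^ p) =
      ENNReal.ofReal (K * (c ^ (p + 1) / (p + 1))) := by
  rw [← ofReal_integral_eq_lintegral_ofReal
      ((integrableOn_Ioc_rpow_of_neg_one_lt hp).const_mul K),
    integral_const_mul, integral_Ioc_rpow_of_neg_one_lt hp hc]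
  filter_upwards [ae_restrict_mem measurableSet_Ioc] with s hs
  have := hs.1
  positivity

lemma setLIntegral_Ioi_ofReal_mul_rpow {K p c : ℝ} (hK : 0 ≤ K) (hp : p < -1) (hc : 0 < c) :
    ∫⁻ s in Ioi c, ENNReal.ofReal (K * s ^ p) =
      ENNReal.ofReal (K * (-c ^ (p + 1) / (p + 1))) := by
  rw [← ofReal_integral_eq_lintegral_ofReal ((integrableOn_Ioi_rpow_of_lt hp hc).const_mul K),
    integral_const_mul, integral_Ioi_rpow_of_lt hp hc]
  filter_upwards [ae_restrict_mem measurableSet_Ioi] with s (hs : c < s)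
  have := hc.trans hs
  positivity

lemma enorm_rpow_two_le_ofReal {x K e s : ℝ} (hs : 0 < s) (hx : ‖x‖ ≤ K * s ^ (-e)) :
    ‖x‖ₑ ^ (2 : ℝ) ≤ ENNReal.ofReal (K ^ 2 * s ^ (-2 * e)) := by
  have hsq : (K * s ^ (-e)) ^ 2 = K ^ 2 * s ^ (-2 * e) := by
    rw [mul_pow, ← rpow_mul_natCast hs.le]
    ring_nf
  rw [ENNReal.rpow_two, ← ofReal_norm, ← ENNReal.ofReal_pow (norm_nonneg _), ← hsq]
  gcongr

lemma eLpNorm_two_Ioi_le_of_rpow_bounds {f : ℝ → ℝ} {A B c p q : ℝ} (hc : 0 < c)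
    (hp : p < 1 / 2) (hq : 1 / 2 < q)
    (hf₀ : ∀ s ∈ Ioc 0 c, ‖f s‖ ≤ A * s ^ (-p)) (hf₁ : ∀ s ∈ Ioi c, ‖f s‖ ≤ B * s ^ (-q)) :
    eLpNorm f 2 (volume.restrict (Ioi 0)) ≤ ENNReal.ofReal
      √(A ^ 2 * c ^ (1 - 2 * p) / (1 - 2 * p) + B ^ 2 * c ^ (1 - 2 * q) / (2 * q - 1)) := by
  have hnear : ∫⁻ s in Ioc 0 c, ‖f s‖ₑ ^ (2 : ℝ) ≤
      ENNReal.ofReal (A ^ 2 * c ^ (1 - 2 * p) / (1 - 2 * p)) := calc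
    _ ≤ ∫⁻ s in Ioc 0 c, ENNReal.ofReal (A ^ 2 * s ^ (-2 * p)) :=
      setLIntegral_mono (by fun_prop) fun s hs => enorm_rpow_two_le_ofReal hs.1 (hf₀ s hs)
    _ = _ := by
      rw [setLIntegral_Ioc_ofReal_mul_rpow (by positivity) (by linarith) hc.le]
      ring_nf
  have hfar : ∫⁻ s in Ioi c, ‖f s‖ₑ ^ (2 : ℝ) ≤
      ENNReal.ofReal (B ^ 2 * c ^ (1 - 2 * q) / (2 * q - 1)) := calc
    _ ≤ ∫⁻ s in Ioi c, ENNReal.ofReal (B ^ 2 * s ^ (-2 * q)) :=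
      setLIntegral_mono (by fun_prop) fun s hs =>
        enorm_rpow_two_le_ofReal (hc.trans hs) (hf₁ s hs)
    _ = _ := by
      rw [setLIntegral_Ioi_ofReal_mul_rpow (by positivity) (by linarith) hc,
        show -2 * q + 1 = 1 - 2 * q by ring, neg_div, ← div_neg, neg_sub, mul_div_assoc]
  have hnear₀ : 0 ≤ A ^ 2 * c ^ (1 - 2 * p) / (1 - 2 * p) :=
    div_nonneg (by positivity) (by linarith)
  have hfar₀ : 0 ≤ B ^ 2 * c ^ (1 - 2 * q) / (2 * q - 1) :=
    div_nonneg (by positivity) (by linarith)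
  rw [eLpNorm_eq_lintegral_rpow_enorm_toReal two_ne_zero ENNReal.ofNat_ne_top,
    ENNReal.toReal_ofNat,
    sqrt_eq_rpow, ← ENNReal.ofReal_rpow_of_nonneg (by positivity) (by norm_num),
    ← Ioc_union_Ioi_eq_Ioi hc.le, lintegral_union measurableSet_Ioi Ioc_disjoint_Ioi_same,
    ENNReal.ofReal_add hnear₀ hfar₀]
  gcongr

lemma sq_mul_rpow_neg_mul_inv_rpow {t : ℝ} (ht : 0 < t) (K r b : ℝ) :
    (K * t ^ (-b)) ^ 2 * t⁻¹ ^ (1 - 2 * (r + b)) = K ^ 2 * (t ^ (r - 1 / 2)) ^ 2 := by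
  rw [inv_rpow ht.le, ← rpow_neg ht.le, mul_pow, ← rpow_mul_natCast ht.le,
    ← rpow_mul_natCast ht.le, mul_assoc, ← rpow_add ht]
  congr 2
  push_cast
  ring

theorem stmt_10_general (M r : ℝ) (hr : r ∈ Set.Ico (0:ℝ) (1/2)) :
    ∃ C > (0:ℝ), ∀ h : ℝ → ℝ, Measurable h → (∀ τ : ℝ, 0 < τ → 0 ≤ h τ ∧ h τ ≤ M) →
      ∀ t : ℝ, 0 < t →
        eLpNorm (fun s : ℝ => (1/(2*Real.pi)) * ∫ τ in Set.Ioi (0:ℝ),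
            h τ * Real.exp (-t * τ) * s ^ (-r) / (τ + s)) 2 (volume.restrict (Set.Ioi 0))
          ≤ ENNReal.ofReal (C * t ^ (r - 1/2)) := by
  obtain ⟨hr₀, hr₁⟩ := hr
  -- `r + a < 1 / 2 < r + (a + 1 / 2)`, with both `a` and `a + 1 / 2` in `(0, 1)`
  set a := (1 / 2 - r) / 2 with ha
  set K : ℝ → ℝ := fun b => 1 / (2 * π) * M * (1 / (1 - b) + 1 / b)
  set E := K a ^ 2 / (1 - 2 * (r + a)) + K (a + 1 / 2) ^ 2 / (2 * (r + (a + 1 / 2)) - 1) with hE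
  refine ⟨√E + 1, by positivity, fun h _ hh t ht => ?_⟩
  have hψ : ∀ b, 0 < b → b < 1 → ∀ s, 0 < s →
      ‖1 / (2 * π) * ∫ τ in Ioi 0, h τ * exp (-t * τ) * s ^ (-r) / (τ + s)‖
        ≤ K b * t ^ (-b) * s ^ (-(r + b)) := fun b hb₀ hb₁ s hs => calc
    _ = 1 / (2 * π) * ‖∫ τ in Ioi 0, h τ * exp (-t * τ) * s ^ (-r) / (τ + s)‖ := by
      rw [norm_mul, norm_of_nonneg (by positivity)]
    _ ≤ 1 / (2 * π) * (M * (1 / (1 - b) + 1 / b) * t ^ (-b) * s ^ (-(r + b))) := by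
      gcongr
      exact norm_setIntegral_mul_exp_div_add_le hh hb₀ hb₁ ht hs
    _ = _ := by ring
  refine (eLpNorm_two_Ioi_le_of_rpow_bounds (inv_pos.2 ht) (p := r + a) (q := r + (a + 1 / 2))
    (by linarith) (by linarith) (fun s hs => hψ a (by linarith) (by linarith) s hs.1)
    (fun s hs => hψ (a + 1 / 2) (by linarith) (by linarith) s ((inv_pos.2 ht).trans hs))).trans ?_
  have hT := rpow_pos_of_pos ht (r - 1 / 2)
  rw [sq_mul_rpow_neg_mul_inv_rpow ht, sq_mul_rpow_neg_mul_inv_rpow ht]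
  refine ENNReal.ofReal_le_ofReal ?_
  calc _ = √(E * (t ^ (r - 1 / 2)) ^ 2) := by rw [hE]; ring_nf
    _ = √E * t ^ (r - 1 / 2) := by rw [sqrt_mul' _ (sq_nonneg _), sqrt_sq hT.le]
    _ ≤ _ := by gcongr; linarith

/-- L²(ℝ₊) bound ‖ψ‖ ≤ C t^{r-1/2} for
ψ(s) = (1/(2π))∫₀^∞ h(τ)e^{-tτ} s^{-r}/(τ+s) dτ, with C depending only on ‖h‖_∞ and r. -/
theorem stmt_10 (M r : ℝ) (hM : 0 ≤ M) (hr : r ∈ Set.Ico (0:ℝ) (1/2)) :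
    ∃ C > (0:ℝ), ∀ h : ℝ → ℝ, Measurable h → (∀ τ : ℝ, 0 < τ → 0 ≤ h τ ∧ h τ ≤ M) →
      ∀ t : ℝ, 0 < t →
        eLpNorm (fun s : ℝ => (1/(2*Real.pi)) * ∫ τ in Set.Ioi (0:ℝ),
            h τ * Real.exp (-t * τ) * s ^ (-r) / (τ + s)) 2 (volume.restrict (Set.Ioi 0))
          ≤ ENNReal.ofReal (C * t ^ (r - 1/2)) :=
  stmt_10_general M r hr
end

section
/- Let h: ℝ₊ → ℝ₊ be bounded measurable and t > 0, r ∈ (0,1). Then ∫_{-∞}^∞ | ∫₀^∞ h(τ) e^{-tτ}/(τ + iλ) dτ |² |λ|^{-r} dλ ≤ C t^{r-1} for a constant C depending only on ‖h‖_∞ and r. -/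
open MeasureTheory Real Set Filter
open scoped ENNReal

/-!
Write `φ τ = h τ e^{-tτ}` and `a = (1 - r) / 2`. Cauchy–Schwarz with the weight `τ^(a-1)` gives
`|∫ φ τ / (τ + iλ) dτ|² ≤ (∫ φ τ^(a-1) dτ) (∫ φ τ^(1-a) / (τ² + λ²) dτ)`. Integrating against
`|λ|^(-r)` and exchanging the integrals, the kernel bound
`∫ |λ|^(-r) / (τ² + λ²) dλ ≤ 4 / (1 - r²) τ^(-1-r)` turns `τ^(1-a)` back into `τ^(a-1)`, so the
whole integral is at most `4 / (1 - r²) (∫ φ τ^(a-1) dτ)²`, and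
`∫₀^∞ e^{-tτ} τ^(a-1) dτ = Γ(a) t^(-a)`.
-/

theorem sq_lintegral_le_mul_lintegral_of_sq_le_mul {α : Type*} [MeasurableSpace α]
    {μ : Measure α} {f u v : α → ℝ≥0∞} (hu : AEMeasurable u μ) (hv : AEMeasurable v μ)
    (h : ∀ᵐ x ∂μ, f x ^ 2 ≤ u x * v x) :
    (∫⁻ x, f x ∂μ) ^ 2 ≤ (∫⁻ x, u x ∂μ) * ∫⁻ x, v x ∂μ := by
  have hsqrt : ∀ a : ℝ≥0∞, (a ^ (1 / 2 : ℝ)) ^ (2 : ℝ) = a := fun a => by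
    rw [← ENNReal.rpow_mul]; norm_num
  have hf : ∀ᵐ x ∂μ, f x ≤ u x ^ (1 / 2 : ℝ) * v x ^ (1 / 2 : ℝ) := by
    filter_upwards [h] with x hx
    rw [← ENNReal.mul_rpow_of_nonneg _ _ (by norm_num), ← ENNReal.rpow_le_rpow_iff two_pos,
      hsqrt]
    exact_mod_cast hx
  calc (∫⁻ x, f x ∂μ) ^ 2 ≤ (∫⁻ x, u x ^ (1 / 2 : ℝ) * v x ^ (1 / 2 : ℝ) ∂μ) ^ 2 := by
        gcongr ?_ ^ 2; exact lintegral_mono_ae hf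
    _ ≤ ((∫⁻ x, u x ∂μ) ^ (1 / 2 : ℝ) * (∫⁻ x, v x ∂μ) ^ (1 / 2 : ℝ)) ^ 2 := by
        gcongr
        simpa only [hsqrt, Pi.mul_apply] using ENNReal.lintegral_mul_le_Lp_mul_Lq μ
          Real.HolderConjugate.two_two (hu.pow_const (1 / 2 : ℝ)) (hv.pow_const (1 / 2 : ℝ))
    _ = (∫⁻ x, u x ∂μ) * ∫⁻ x, v x ∂μ := by
        rw [mul_pow, ← ENNReal.rpow_two, ← ENNReal.rpow_two, hsqrt, hsqrt]

theorem lintegral_comp_abs {f : ℝ → ℝ≥0∞} (hf : Measurable f) :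
    ∫⁻ x, f |x| = 2 * ∫⁻ x in Ioi 0, f x := by
  have hpos : ∫⁻ x in Ioi 0, f |x| = ∫⁻ x in Ioi 0, f x :=
    setLIntegral_congr_fun measurableSet_Ioi fun x hx => by rw [abs_of_pos hx]
  have hneg : ∫⁻ x in Iic 0, f |x| = ∫⁻ x in Ioi 0, f x := by
    conv_lhs => rw [← Measure.map_neg_eq_self (volume : Measure ℝ)]
    rw [setLIntegral_map (f := fun x => f |x|) measurableSet_Iic (hf.comp measurable_abs)
      measurable_neg, neg_preimage, neg_Iic, neg_zero, setLIntegral_congr Ioi_ae_eq_Ici.symm]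
    simpa only [abs_neg] using hpos
  rw [← lintegral_add_compl _ measurableSet_Iic, compl_Iic, hneg, hpos, two_mul]

theorem setLIntegral_Ioc_rpow {s b : ℝ} (hs : -1 < s) (hb : 0 ≤ b) :
    ∫⁻ x in Ioc 0 b, ENNReal.ofReal (x ^ s) = ENNReal.ofReal (b ^ (s + 1) / (s + 1)) := by
  have hint : IntegrableOn (fun x : ℝ => x ^ s) (Ioc 0 b) := by
    simpa [intervalIntegrable_iff, uIoc_of_le hb] using
      intervalIntegral.intervalIntegrable_rpow' (a := 0) (b := b) hs
  rw [← ofReal_integral_eq_lintegral_ofReal hint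
      ((ae_restrict_mem measurableSet_Ioc).mono fun x hx => rpow_nonneg hx.1.le s),
    ← intervalIntegral.integral_of_le hb, integral_rpow (Or.inl hs),
    zero_rpow (by linarith), sub_zero]

theorem setLIntegral_Ioi_rpow {s c : ℝ} (hs : s < -1) (hc : 0 < c) :
    ∫⁻ x in Ioi c, ENNReal.ofReal (x ^ s) = ENNReal.ofReal (-c ^ (s + 1) / (s + 1)) := by
  rw [← ofReal_integral_eq_lintegral_ofReal (integrableOn_Ioi_rpow_of_lt hs hc)
      ((ae_restrict_mem measurableSet_Ioi).mono fun x hx => rpow_nonneg (hc.trans hx).le s),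
    integral_Ioi_rpow_of_lt hs hc]

theorem lintegral_abs_rpow_neg_div_sq_add_sq_le {r τ : ℝ} (hr0 : 0 < r) (hr1 : r < 1)
    (hτ : 0 < τ) :
    ∫⁻ l, ENNReal.ofReal (|l| ^ (-r) / (τ ^ 2 + l ^ 2))
      ≤ ENNReal.ofReal (4 / (1 - r ^ 2) * τ ^ (-1 - r)) := by
  have hnear : ∫⁻ x in Ioc 0 τ, ENNReal.ofReal (x ^ (-r) / (τ ^ 2 + x ^ 2))
      ≤ ENNReal.ofReal (τ ^ (-1 - r) / (1 - r)) := by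
    have hτ2 : τ ^ (-r + 1) / (-r + 1) * (τ ^ 2)⁻¹ = τ ^ (-1 - r) / (1 - r) := by
      rw [← rpow_two, ← rpow_neg hτ.le, div_mul_eq_mul_div, ← rpow_add hτ]
      ring_nf
    rw [← hτ2, ENNReal.ofReal_mul (div_nonneg (rpow_nonneg hτ.le _) (by linarith)),
      ← setLIntegral_Ioc_rpow (by linarith) hτ.le, ← lintegral_mul_const' _ _ (by simp)]
    refine setLIntegral_mono' measurableSet_Ioc fun x hx => ?_
    rw [← ENNReal.ofReal_mul (rpow_nonneg hx.1.le _), div_eq_mul_inv]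
    gcongr
    · exact rpow_nonneg hx.1.le _
    · exact le_add_of_nonneg_right (sq_nonneg x)
  have hfar : ∫⁻ x in Ioi τ, ENNReal.ofReal (x ^ (-r) / (τ ^ 2 + x ^ 2))
      ≤ ENNReal.ofReal (τ ^ (-1 - r) / (1 + r)) := by
    have hexp : -τ ^ (-r - 2 + 1) / (-r - 2 + 1) = τ ^ (-1 - r) / (1 + r) := by
      rw [show -r - 2 + 1 = -(1 + r) by ring, neg_div_neg_eq, neg_add']
    rw [← hexp, ← setLIntegral_Ioi_rpow (by linarith) hτ]
    refine setLIntegral_mono' measurableSet_Ioi fun x (hx : τ < x) => ?_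
    have hx0 : 0 < x := hτ.trans hx
    rw [rpow_sub hx0, rpow_two]
    gcongr
    exact le_add_of_nonneg_left (sq_nonneg τ)
  have habs := lintegral_comp_abs
    (f := fun x => ENNReal.ofReal (x ^ (-r) / (τ ^ 2 + x ^ 2))) (by fun_prop)
  simp only [sq_abs] at habs
  calc ∫⁻ l, ENNReal.ofReal (|l| ^ (-r) / (τ ^ 2 + l ^ 2))
      = 2 * ((∫⁻ x in Ioc 0 τ, ENNReal.ofReal (x ^ (-r) / (τ ^ 2 + x ^ 2)))
          + ∫⁻ x in Ioi τ, ENNReal.ofReal (x ^ (-r) / (τ ^ 2 + x ^ 2))) := by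
        rw [habs, ← lintegral_union measurableSet_Ioi (Ioc_disjoint_Ioi le_rfl),
          Ioc_union_Ioi_eq_Ioi hτ.le]
    _ ≤ 2 * (ENNReal.ofReal (τ ^ (-1 - r) / (1 - r))
          + ENNReal.ofReal (τ ^ (-1 - r) / (1 + r))) := by gcongr
    _ = ENNReal.ofReal (4 / (1 - r ^ 2) * τ ^ (-1 - r)) := by
        have h1r : 0 < 1 - r := by linarith
        have h1r' : 0 < 1 + r := by linarith
        have h1r2 : 1 - r ^ 2 ≠ 0 := by nlinarith
        rw [← ENNReal.ofReal_add (by positivity) (by positivity), ← ENNReal.ofReal_ofNat 2,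
          ← ENNReal.ofReal_mul zero_le_two]
        congr 1
        field_simp
        ring

theorem lintegral_rpow_mul_exp_neg_mul_Ioi {a t : ℝ} (ha : 0 < a) (ht : 0 < t) :
    ∫⁻ τ in Ioi 0, ENNReal.ofReal (τ ^ (a - 1) * exp (-(t * τ)))
      = ENNReal.ofReal ((1 / t) ^ a * Gamma a) := by
  have hval := integral_rpow_mul_exp_neg_mul_Ioi ha ht
  have hint : IntegrableOn (fun τ : ℝ => τ ^ (a - 1) * exp (-(t * τ))) (Ioi 0) :=
    Integrable.of_integral_ne_zero (by rw [hval]; positivity)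
  rw [← ofReal_integral_eq_lintegral_ofReal hint
      ((ae_restrict_mem measurableSet_Ioi).mono fun τ (hτ : 0 < τ) => by positivity), hval]

theorem Complex.sq_norm_ofReal_add_I_mul (x y : ℝ) :
    ‖(x : ℂ) + Complex.I * y‖ ^ 2 = x ^ 2 + y ^ 2 := by
  rw [Complex.sq_norm, mul_comm, Complex.normSq_add_mul_I]

theorem lintegral_enorm_integral_div_sq_mul_rpow_le {r : ℝ} (hr0 : 0 < r) (hr1 : r < 1)
    {φ : ℝ → ℂ} (hφ : Measurable φ) :
    ∫⁻ l : ℝ, ‖∫ τ in Ioi 0, φ τ / (τ + Complex.I * l)‖ₑ ^ 2 * ENNReal.ofReal (|l| ^ (-r))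
      ≤ ENNReal.ofReal (4 / (1 - r ^ 2))
        * (∫⁻ τ in Ioi 0, ENNReal.ofReal (‖φ τ‖ * τ ^ ((1 - r) / 2 - 1))) ^ 2 := by
  set p := (1 - r) / 2 - 1 with hp
  set U := ∫⁻ τ in Ioi 0, ENNReal.ofReal (‖φ τ‖ * τ ^ p)
  set V : ℝ → ℝ≥0∞ := fun l =>
    ∫⁻ τ in Ioi 0, ENNReal.ofReal (‖φ τ‖ * τ ^ (-p)) * ENNReal.ofReal (τ ^ 2 + l ^ 2)⁻¹
  have hsplit (l : ℝ) : ‖∫ τ in Ioi 0, φ τ / (τ + Complex.I * l)‖ₑ ^ 2 ≤ U * V l := by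
    refine (pow_le_pow_left' (enorm_integral_le_lintegral_enorm _) 2).trans ?_
    refine sq_lintegral_le_mul_lintegral_of_sq_le_mul (by fun_prop) (by fun_prop) ?_
    filter_upwards [ae_restrict_mem measurableSet_Ioi] with τ (hτ : 0 < τ)
    have hτl : 0 < τ ^ 2 + l ^ 2 := by positivity
    rw [← ofReal_norm, ← ENNReal.ofReal_pow (norm_nonneg _),
      ← ENNReal.ofReal_mul (by positivity), ← ENNReal.ofReal_mul (by positivity), norm_div,
      div_pow, Complex.sq_norm_ofReal_add_I_mul, rpow_neg hτ.le]
    refine le_of_eq (congrArg _ ?_)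
    have : τ ^ p ≠ 0 := (rpow_pos_of_pos hτ p).ne'
    field_simp
  have hweighted :
      ∫⁻ l, V l * ENNReal.ofReal (|l| ^ (-r)) ≤ ENNReal.ofReal (4 / (1 - r ^ 2)) * U := by
    calc ∫⁻ l, V l * ENNReal.ofReal (|l| ^ (-r))
        = ∫⁻ τ in Ioi 0, ENNReal.ofReal (‖φ τ‖ * τ ^ (-p))
            * ∫⁻ l, ENNReal.ofReal (|l| ^ (-r) / (τ ^ 2 + l ^ 2)) := by
          simp_rw [V, ← lintegral_mul_const' _ _ ENNReal.ofReal_ne_top]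
          rw [lintegral_lintegral_swap (by fun_prop)]
          refine lintegral_congr fun τ => ?_
          rw [← lintegral_const_mul' _ _ ENNReal.ofReal_ne_top]
          refine lintegral_congr fun l => ?_
          rw [mul_assoc, ← ENNReal.ofReal_mul (by positivity), inv_mul_eq_div]
      _ ≤ ∫⁻ τ in Ioi 0, ENNReal.ofReal (‖φ τ‖ * τ ^ (-p))
            * ENNReal.ofReal (4 / (1 - r ^ 2) * τ ^ (-1 - r)) :=
          setLIntegral_mono' measurableSet_Ioi fun τ hτ => by
            gcongr; exact lintegral_abs_rpow_neg_div_sq_add_sq_le hr0 hr1 hτ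
      _ = ENNReal.ofReal (4 / (1 - r ^ 2)) * U := by
          rw [← lintegral_const_mul' _ _ ENNReal.ofReal_ne_top]
          refine setLIntegral_congr_fun measurableSet_Ioi fun τ (hτ : 0 < τ) => ?_
          have h1r : 0 < 1 - r ^ 2 := by nlinarith
          rw [← ENNReal.ofReal_mul (by positivity), ← ENNReal.ofReal_mul (by positivity)]
          congr 1
          have hexp : τ ^ (-p) * τ ^ (-1 - r) = τ ^ p := by
            rw [← rpow_add hτ, hp]; ring_nf
          linear_combination (4 / (1 - r ^ 2) * ‖φ τ‖) * hexp
  calc ∫⁻ l : ℝ, ‖∫ τ in Ioi 0, φ τ / (τ + Complex.I * l)‖ₑ ^ 2 * ENNReal.ofReal (|l| ^ (-r))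
      ≤ ∫⁻ l, U * (V l * ENNReal.ofReal (|l| ^ (-r))) :=
        lintegral_mono fun l => by rw [← mul_assoc]; gcongr; exact hsplit l
    _ = U * ∫⁻ l, V l * ENNReal.ofReal (|l| ^ (-r)) := lintegral_const_mul _ (by fun_prop)
    _ ≤ U * (ENNReal.ofReal (4 / (1 - r ^ 2)) * U) := by gcongr
    _ = ENNReal.ofReal (4 / (1 - r ^ 2)) * U ^ 2 := by ring

theorem setLIntegral_abs_mul_exp_mul_rpow_le {g : ℝ → ℝ} {M a t : ℝ} (hM : 0 ≤ M) (ha : 0 < a)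
    (ht : 0 < t) (hg : ∀ τ, 0 < τ → |g τ| ≤ M) :
    ∫⁻ τ in Ioi 0, ENNReal.ofReal (|g τ * exp (-t * τ)| * τ ^ (a - 1))
      ≤ ENNReal.ofReal (M * ((1 / t) ^ a * Gamma a)) := by
  rw [ENNReal.ofReal_mul hM, ← lintegral_rpow_mul_exp_neg_mul_Ioi ha ht,
    ← lintegral_const_mul' _ _ ENNReal.ofReal_ne_top]
  refine setLIntegral_mono' measurableSet_Ioi fun τ (hτ : 0 < τ) => ?_
  rw [← ENNReal.ofReal_mul hM, abs_mul, abs_of_pos (exp_pos _), neg_mul]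
  apply ENNReal.ofReal_le_ofReal
  calc |g τ| * exp (-(t * τ)) * τ ^ (a - 1) ≤ M * exp (-(t * τ)) * τ ^ (a - 1) := by
        gcongr; exact hg τ hτ
    _ = M * (τ ^ (a - 1) * exp (-(t * τ))) := by ring

/-- weighted L² bound for the Laplace-type Cauchy integral:
∫ℝ |∫₀^∞ h(τ)e^{-tτ}/(τ+iλ) dτ|² |λ|^{-r} dλ ≤ C t^{r-1}. -/
theorem stmt_11 (M r : ℝ) (hM : 0 ≤ M) (hr : r ∈ Set.Ioo (0:ℝ) 1) :
    ∃ C > (0:ℝ), ∀ h : ℝ → ℝ, Measurable h → (∀ τ : ℝ, 0 < τ → 0 ≤ h τ ∧ h τ ≤ M) →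
      ∀ t : ℝ, 0 < t →
        (∫ l : ℝ, (‖∫ τ in Set.Ioi (0:ℝ),
            ((h τ * Real.exp (-t * τ) : ℝ) : ℂ) / ((τ : ℂ) + Complex.I * l)‖) ^ 2
            * |l| ^ (-r))
          ≤ C * t ^ (r - 1) := by
  obtain ⟨hr0, hr1⟩ := hr
  set a := (1 - r) / 2 with ha_def
  have ha : 0 < a := by linarith
  have hc : 0 < 4 / (1 - r ^ 2) := div_pos four_pos (by nlinarith)
  refine ⟨4 / (1 - r ^ 2) * M ^ 2 * Gamma a ^ 2 + 1, by positivity, fun h hh hbnd t ht => ?_⟩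
  set φ : ℝ → ℂ := fun τ => ((h τ * exp (-t * τ) : ℝ) : ℂ)
  have hJ : Measurable fun l : ℝ => ∫ τ in Ioi 0, φ τ / (τ + Complex.I * l) :=
    (by fun_prop : Measurable fun p : ℝ × ℝ => φ p.2 / (p.2 + Complex.I * p.1)
      ).stronglyMeasurable.integral_prod_right'.measurable
  have hφ : ∫⁻ τ in Ioi 0, ENNReal.ofReal (‖φ τ‖ * τ ^ (a - 1))
      ≤ ENNReal.ofReal (M * ((1 / t) ^ a * Gamma a)) := by
    simp only [φ, Complex.norm_real, norm_eq_abs]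
    exact setLIntegral_abs_mul_exp_mul_rpow_le hM ha ht fun τ hτ =>
      abs_le.mpr ⟨by linarith [(hbnd τ hτ).1], (hbnd τ hτ).2⟩
  have hpow : ((1 / t) ^ a) ^ 2 = t ^ (r - 1) := by
    rw [one_div, inv_rpow ht.le, ← rpow_neg ht.le, ← rpow_mul_natCast ht.le, ha_def]
    ring_nf
  rw [integral_eq_lintegral_of_nonneg_ae (ae_of_all _ fun l => by positivity)
    (by fun_prop)]
  refine ENNReal.toReal_le_of_le_ofReal (by positivity) ?_
  calc ∫⁻ l : ℝ, ENNReal.ofReal (‖∫ τ in Ioi 0, φ τ / (τ + Complex.I * l)‖ ^ 2 * |l| ^ (-r))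
      = ∫⁻ l : ℝ, ‖∫ τ in Ioi 0, φ τ / (τ + Complex.I * l)‖ₑ ^ 2
          * ENNReal.ofReal (|l| ^ (-r)) := by
        simp_rw [ENNReal.ofReal_mul (sq_nonneg _), ENNReal.ofReal_pow (norm_nonneg _),
          ofReal_norm]
    _ ≤ ENNReal.ofReal (4 / (1 - r ^ 2)) * ENNReal.ofReal (M * ((1 / t) ^ a * Gamma a)) ^ 2 :=
        (lintegral_enorm_integral_div_sq_mul_rpow_le hr0 hr1 (by fun_prop)).trans (by gcongr)
    _ = ENNReal.ofReal (4 / (1 - r ^ 2) * M ^ 2 * Gamma a ^ 2 * t ^ (r - 1)) := by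
        rw [← ENNReal.ofReal_pow (by positivity), ← ENNReal.ofReal_mul hc.le, ← hpow]
        ring_nf
    _ ≤ ENNReal.ofReal ((4 / (1 - r ^ 2) * M ^ 2 * Gamma a ^ 2 + 1) * t ^ (r - 1)) := by
        gcongr
        linarith
end
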